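/- The L² distance between Square Root Velocity Transforms is invariant under simultaneous reparameterization: for smooth curves c₁, c₂: [0,1] → ℝ³ with nowhere-vanishing derivatives and any φ ∈ Diff⁺([0,1]), ∫₀¹ ‖SRVT(c₁∘φ)(t) − SRVT(c₂∘φ)(t)‖² dt = ∫₀¹ ‖SRVT(c₁)(s) − SRVT(c₂)(s)‖² ds. -/

import Mathlib

noncomputable section

/-- The unit interval `[0,1] ⊆ ℝ`. -/
def I01 : Set ℝ := Set.Icc 0 1

/-- `φ : ℝ → ℝ` restricts to an orientation-preserving C¹ diffeomorphism of `[0,1]`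
fixing the endpoints: bijective on `[0,1]`, C¹ with C¹ inverse, `φ 0 = 0`, `φ 1 = 1`,
positive derivative. -/
def IsPDiff (φ : ℝ → ℝ) : Prop :=
  Set.BijOn φ I01 I01 ∧ ContDiffOn ℝ 1 φ I01 ∧
  (∃ ψ : ℝ → ℝ, ContDiffOn ℝ 1 ψ I01 ∧ Set.InvOn ψ φ I01 I01) ∧
  φ 0 = 0 ∧ φ 1 = 1 ∧ ∀ t ∈ I01, 0 < derivWithin φ I01 t

/-- The Square Root Velocity Transform of a curve `c : [0,1] → ℝ³`. -/
def SRVT (c : ℝ → EuclideanSpace ℝ (Fin 3)) (t : ℝ) : EuclideanSpace ℝ (Fin 3) :=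
  (Real.sqrt ‖derivWithin c I01 t‖)⁻¹ • derivWithin c I01 t

lemma uniqueDiffOn_I01 : UniqueDiffOn ℝ I01 := uniqueDiffOn_Icc one_pos

lemma srvt_comp (c : ℝ → EuclideanSpace ℝ (Fin 3)) (hc : ContDiffOn ℝ (⊤ : ℕ∞) c I01)
    (φ : ℝ → ℝ) (hφ : IsPDiff φ) {t : ℝ} (ht : t ∈ I01) :
    SRVT (c ∘ φ) t = Real.sqrt (derivWithin φ I01 t) • SRVT c (φ t) := by
  obtain ⟨hbij, hφC, -, -, -, hpos⟩ := hφ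
  have hmaps : Set.MapsTo φ I01 I01 := hbij.mapsTo
  have hd : derivWithin (c ∘ φ) I01 t
      = derivWithin φ I01 t • derivWithin c I01 (φ t) :=
    derivWithin.scomp t ((hc.differentiableOn (by simp)) (φ t) (hmaps ht))
      ((hφC.differentiableOn one_ne_zero) t ht) hmaps
  set p := derivWithin φ I01 t with hp
  have hp0 : 0 < p := hpos t ht
  set v := derivWithin c I01 (φ t) with hv
  by_cases hv0 : v = 0
  · simp [SRVT, hd, hv0, ← hv]
  · have hnv : 0 < ‖v‖ := norm_pos_iff.mpr hv0
    have hsp : Real.sqrt p ≠ 0 := by positivity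
    have hsv : Real.sqrt ‖v‖ ≠ 0 := by positivity
    simp only [SRVT, hd, ← hv, norm_smul, Real.norm_eq_abs, abs_of_pos hp0]
    rw [Real.sqrt_mul hp0.le, smul_smul, smul_smul]
    congr 1
    field_simp
    rw [Real.sq_sqrt hp0.le]

lemma srvt_contOn (c : ℝ → EuclideanSpace ℝ (Fin 3)) (hc : ContDiffOn ℝ (⊤ : ℕ∞) c I01)
    (hc' : ∀ t ∈ I01, derivWithin c I01 t ≠ 0) : ContinuousOn (SRVT c) I01 := by
  have hdc : ContinuousOn (derivWithin c I01) I01 :=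
    hc.continuousOn_derivWithin uniqueDiffOn_I01 (by simp)
  exact ((hdc.norm.sqrt).inv₀ (fun t ht => by
    have := norm_pos_iff.mpr (hc' t ht); positivity)).smul hdc

/-- the `L²` distance between SRVTs is invariant under simultaneous
reparameterization by `φ ∈ Diff⁺([0,1])`. -/
theorem srvt_L2_dist_reparam_invariant (c₁ c₂ : ℝ → EuclideanSpace ℝ (Fin 3))
    (hc₁ : ContDiffOn ℝ (⊤ : ℕ∞) c₁ I01) (hc₂ : ContDiffOn ℝ (⊤ : ℕ∞) c₂ I01)
    (hc₁' : ∀ t ∈ I01, derivWithin c₁ I01 t ≠ 0)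
    (hc₂' : ∀ t ∈ I01, derivWithin c₂ I01 t ≠ 0)
    (φ : ℝ → ℝ) (hφ : IsPDiff φ) :
    ∫ t in (0:ℝ)..1, ‖SRVT (c₁ ∘ φ) t - SRVT (c₂ ∘ φ) t‖ ^ 2 =
      ∫ s in (0:ℝ)..1, ‖SRVT c₁ s - SRVT c₂ s‖ ^ 2 := by
  have hbij := hφ.1
  have hφC := hφ.2.1
  have h0 := hφ.2.2.2.1
  have h1 := hφ.2.2.2.2.1
  have hpos := hφ.2.2.2.2.2
  have huIcc : Set.uIcc (0:ℝ) 1 = I01 := Set.uIcc_of_le zero_le_one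
  set g : ℝ → ℝ := fun s => ‖SRVT c₁ s - SRVT c₂ s‖ ^ 2 with hg
  have key : Set.EqOn (fun t => ‖SRVT (c₁ ∘ φ) t - SRVT (c₂ ∘ φ) t‖ ^ 2)
      (fun t => derivWithin φ I01 t • (g ∘ φ) t) (Set.uIcc (0:ℝ) 1) := by
    intro t ht
    rw [huIcc] at ht
    simp only [hg, Function.comp_apply, smul_eq_mul,
      srvt_comp c₁ hc₁ φ hφ ht, srvt_comp c₂ hc₂ φ hφ ht, ← smul_sub, norm_smul,
      Real.norm_eq_abs, abs_of_nonneg (Real.sqrt_nonneg _), mul_pow,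
      Real.sq_sqrt (hpos t ht).le]
  rw [intervalIntegral.integral_congr key]
  have hgC : ContinuousOn g I01 :=
    ((srvt_contOn c₁ hc₁ hc₁').sub (srvt_contOn c₂ hc₂ hc₂')).norm.pow 2
  have := intervalIntegral.integral_comp_smul_deriv'' (a := 0) (b := 1)
    (f := φ) (f' := derivWithin φ I01) (g := g)
    (by rw [huIcc]; exact hφC.continuousOn)
    (by
      intro x hx
      simp only [min_eq_left zero_le_one, max_eq_right zero_le_one] at hx
      have hxI : x ∈ I01 := Set.Ioo_subset_Icc_self hx
      have hmem : I01 ∈ nhdsWithin x (Set.Ioi x) :=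
        mem_nhdsWithin.mpr ⟨Set.Iio 1, isOpen_Iio, hx.2,
          fun y hy => ⟨(hx.1.trans hy.2).le, hy.1.le⟩⟩
      exact (((hφC.differentiableOn one_ne_zero) x hxI).hasDerivWithinAt).mono_of_mem_nhdsWithin hmem)
    (by rw [huIcc]; exact hφC.continuousOn_derivWithin uniqueDiffOn_I01 le_rfl)
    (by rw [huIcc, hbij.image_eq]; exact hgC)
  rw [this, h0, h1]
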